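/- arXiv:2503.12075 — 4 statements merged into one kernel-verified Lean document; each statement's English description precedes it below -/
import Mathlib

section
/- Let V be a finite-dimensional real inner product space and u : V → ℝ a harmonic function (i.e. the trace of its Hessian vanishes) that is twice differentiable at a point p with ∇u(p) ≠ 0. Then at p, the squared norm of the directional derivative of ∇u in the direction ∇u/|∇u| is at most ((n-1)/n) times the squared Frobenius norm of the Hessian of u, where n = dim V. Equivalently, for a symmetric n×n real matrix H with trace zero and any unit vector e, |H e|² ≤ ((n-1)/n) |H|², where |H| is the Frobenius norm. -/
open Finset

/-- Refined Kato inequality, linear-algebra form: for a symmetric trace-free real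
`n × n` matrix `H` and a unit vector `e`, `|H e|² ≤ ((n-1)/n) |H|²` where `|H|` is
the Frobenius norm. -/
theorem refined_kato_matrix (n : ℕ) (hn : 0 < n)
    (H : Matrix (Fin n) (Fin n) ℝ) (hsymm : H.IsSymm) (htr : H.trace = 0)
    (e : Fin n → ℝ) (he : ∑ i, e i ^ 2 = 1) :
    ∑ i, (∑ j, H i j * e j) ^ 2 ≤ ((n - 1 : ℝ) / n) * ∑ i, ∑ j, H i j ^ 2 := by
  classical
  have hsym : ∀ i j, H j i = H i j := by
    intro i j
    have := congrFun (congrFun hsymm i) j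
    simpa [Matrix.transpose_apply] using this
  have hdiag : ∑ i, H i i = 0 := by simpa [Matrix.trace, Matrix.diag] using htr
  rcases Nat.lt_or_ge n 2 with h1 | hn2
  · -- n = 1
    interval_cases n
    have h0 : H 0 0 = 0 := by simpa using hdiag
    simp [Fin.sum_univ_one, h0]
  · -- n ≥ 2
    set N : ℝ := (n : ℝ) with hN
    have hN2 : (2 : ℝ) ≤ N := by rw [hN]; exact_mod_cast hn2
    set v : Fin n → ℝ := fun i => ∑ j, H i j * e j with hv
    set a : ℝ := ∑ i, e i * v i with ha
    set w : Fin n → ℝ := fun i => v i - a * e i with hw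
    set W : ℝ := ∑ i, w i ^ 2 with hWdef
    set S : ℝ := ∑ i, ∑ j, H i j ^ 2 with hSdef
    set g : Fin n → ℝ := fun i => ∑ j, H i j * w j with hg
    set c : ℝ := -a / (N - 1) with hc
    set b : ℝ := a - c with hb
    have hee : ∑ i, e i * e i = 1 := by simpa [sq] using he
    have hww : ∑ i, w i * w i = W := by simp [hWdef, sq]
    have hwe : ∑ i, e i * w i = 0 := by
      have h : ∀ i, e i * w i = e i * v i - a * (e i * e i) := by
        intro i; simp only [hw]; ring
      rw [Finset.sum_congr rfl fun i _ => h i, Finset.sum_sub_distrib,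
        ← Finset.mul_sum, hee, ← ha]
      ring
    have hwv : ∑ i, w i * v i = W := by
      have h : ∀ i, w i * v i = w i * w i + a * (e i * w i) := by
        intro i; simp only [hw]; ring
      rw [Finset.sum_congr rfl fun i _ => h i, Finset.sum_add_distrib,
        ← Finset.mul_sum, hwe, hww]
      ring
    have hvv : ∑ i, v i ^ 2 = a ^ 2 + W := by
      have h : ∀ i, v i ^ 2 = w i * w i + 2 * a * (e i * w i) + a ^ 2 * (e i * e i) := by
        intro i; simp only [hw]; ring
      rw [Finset.sum_congr rfl fun i _ => h i, Finset.sum_add_distrib,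
        Finset.sum_add_distrib, ← Finset.mul_sum, ← Finset.mul_sum, hwe, hee, hww]
      ring
    have heg : ∑ i, e i * g i = W := by
      have h1 : ∑ i, e i * g i = ∑ j, w j * v j := by
        simp only [hg, Finset.mul_sum]
        rw [Finset.sum_comm]
        refine Finset.sum_congr rfl fun j _ => ?_
        simp only [hv, Finset.mul_sum]
        refine Finset.sum_congr rfl fun i _ => ?_
        rw [hsym j i]; ring
      rw [h1, hwv]
    -- the key inner sum identity
    have inner : ∀ i, ∑ j, (H i j - (b * e i * e j + w i * e j + e i * w j
          + c * (if i = j then (1:ℝ) else 0))) ^ 2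
        = (∑ j, H i j ^ 2) + (b ^ 2 + 2 * b * c) * (e i * e i) + (w i * w i)
          + W * (e i * e i) + c ^ 2
          - (2 * b) * (e i * v i) - 2 * (w i * v i) - 2 * (e i * g i)
          - (2 * c) * H i i + (2 * b + 4 * c) * (e i * w i) := by
      intro i
      have hX : ∀ j, (H i j - (b * e i * e j + w i * e j + e i * w j
            + c * (if i = j then (1:ℝ) else 0))) ^ 2
          = (H i j ^ 2 + (b ^ 2 * (e i * e i) + w i * w i + 2 * b * (e i * w i)) * (e j * e j)
            + (e i * e i) * (w j * w j)
            - (2 * b * e i + 2 * w i) * (H i j * e j) - (2 * e i) * (H i j * w j)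
            + (2 * b * (e i * e i) + 2 * (w i * e i)) * (e j * w j))
            + (if i = j then (-2 * c * (H i j - (b * e i * e j + w i * e j + e i * w j))
                + c ^ 2) else 0) := by
        intro j; split_ifs with hij <;> ring
      rw [Finset.sum_congr rfl fun j _ => hX j, Finset.sum_add_distrib]
      rw [Finset.sum_ite_eq]
      simp only [mem_univ, if_true]
      simp only [Finset.sum_add_distrib, Finset.sum_sub_distrib, ← Finset.mul_sum]
      rw [hee, hww, hwe]
      have hvi : ∑ j, H i j * e j = v i := rfl
      have hgi : ∑ j, H i j * w j = g i := rfl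
      rw [hvi, hgi]
      simp only [hw]
      ring
    -- sum it up
    have hT0 : (0:ℝ) ≤ ∑ i, ∑ j, (H i j - (b * e i * e j + w i * e j + e i * w j
          + c * (if i = j then (1:ℝ) else 0))) ^ 2 :=
      Finset.sum_nonneg fun i _ => Finset.sum_nonneg fun j _ => sq_nonneg _
    have hT : ∑ i, ∑ j, (H i j - (b * e i * e j + w i * e j + e i * w j
          + c * (if i = j then (1:ℝ) else 0))) ^ 2
        = S - a ^ 2 + 2 * a * c + (N - 1) * c ^ 2 - 2 * W := by
      rw [Finset.sum_congr rfl fun i _ => inner i]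
      simp only [Finset.sum_add_distrib, Finset.sum_sub_distrib, ← Finset.mul_sum]
      rw [hee, hww, hwe, ← ha, hwv, heg, hdiag, ← hSdef]
      rw [Finset.sum_const, Finset.card_univ, Fintype.card_fin, nsmul_eq_mul, ← hN]
      simp only [hb]
      ring
    have key : (0:ℝ) ≤ S - a ^ 2 + 2 * a * c + (N - 1) * c ^ 2 - 2 * W := hT ▸ hT0
    have hne : N - 1 ≠ 0 := by linarith
    have hcc : (N - 1) * c = -a := by
      rw [hc, mul_comm, div_mul_cancel₀ _ hne]
    have e1 : (N - 1) * (S - a ^ 2 + 2 * a * c + (N - 1) * c ^ 2 - 2 * W)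
        = (N - 1) * S - N * a ^ 2 - 2 * (N - 1) * W := by
      linear_combination (a + (N - 1) * c) * hcc
    have hW0 : (0:ℝ) ≤ W := Finset.sum_nonneg fun i _ => sq_nonneg _
    have key2 : N * a ^ 2 + 2 * (N - 1) * W ≤ (N - 1) * S := by
      nlinarith [mul_nonneg (by linarith : (0:ℝ) ≤ N - 1) key]
    have hN0 : (0:ℝ) < N := by linarith
    rw [hvv]  -- goal should now be a^2 + W ≤ (N-1)/N * S  (after set rewrote it)
    rw [div_mul_eq_mul_div, le_div_iff₀ hN0]
    nlinarith [key2, hW0]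
end

section
/- Let (P, ρ) be a probability space, f : P → ℝ integrable with ∫_{P×P} |f(v) - f(v')| dρ(v)dρ(v') =: Osc, and suppose the set E = {v : f(v) ∉ ℤ} satisfies ρ(E) < 1/4 and Osc < 1/4. Then there exists an integer k and a set E' ⊆ P with ρ(E') ≥ 1/2 on which f ≡ k. -/
/-!
Pick an integer median `k` of `f`, so that `f ≤ k - 1` and `f ≥ k + 1` each have probability at
most `1/2`, and write `a, b, c` for the probabilities of `f ≤ k - 1`, `f = k`, `f ≥ k + 1`.
Integrality gives `a + b + c > 3/4`. Every pair whose values lie on opposite sides of the gap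
`[k - 1, k]`, or of `[k, k + 1]`, contributes at least one unit of oscillation per gap crossed,
so `Osc ≥ 2a(b + c) + 2(a + b)c`. If `b < 1/2`, this exceeds `1/4`.
-/

open MeasureTheory ProbabilityTheory Filter Set

lemma Int.exists_not_sub_one_and {p : ℤ → Prop} (hbot : ∀ᶠ n in atBot, ¬ p n)
    (hp : ∃ n, p n) : ∃ k, ¬ p (k - 1) ∧ p k := by
  classical
  obtain ⟨N, hN⟩ := eventually_atBot.1 hbot
  obtain ⟨k, hk, hmin⟩ := Int.exists_least_of_bdd
    ⟨N + 1, fun z hz => by by_contra! h; exact hN z (by omega) hz⟩ hp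
  exact ⟨k, fun h => by linarith [hmin _ h], hk⟩

lemma quarter_lt_two_mul_add_two_mul {a b c : ℝ} (ha₀ : 0 ≤ a) (hc₀ : 0 ≤ c)
    (ha : a ≤ 1 / 2) (hb : b ≤ 1 / 2) (hc : c ≤ 1 / 2) (habc : 3 / 4 < a + b + c) :
    1 / 4 < 2 * a * (b + c) + 2 * (a + b) * c := by
  nlinarith [mul_nonneg ha₀ hc₀, mul_nonneg (sub_nonneg.2 ha) (sub_nonneg.2 hc),
    mul_nonneg (sub_nonneg.2 hb) (add_nonneg ha₀ hc₀)]

lemma MeasureTheory.measureReal_add_measureReal_le {α : Type*} [MeasurableSpace α]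
    {μ : Measure α} [IsFiniteMeasure μ] {s t u : Set α} (hst : Disjoint s t)
    (ht : MeasurableSet t) (hu : s ∪ t ⊆ u) : μ.real s + μ.real t ≤ μ.real u :=
  (measureReal_union hst ht).symm.le.trans (measureReal_mono hu)

section Crossing

variable {P : Type*}

def crossingPairs (f : P → ℝ) (s t : ℝ) : Set (P × P) :=
  {v | f v ≤ s} ×ˢ {v | t ≤ f v} ∪ {v | t ≤ f v} ×ˢ {v | f v ≤ s}

lemma indicator_crossingPairs_add_le_abs_sub (f : P → ℝ) (k : ℝ) (p : P × P) :
    (crossingPairs f (k - 1) k).indicator 1 p + (crossingPairs f k (k + 1)).indicator 1 p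
      ≤ |f p.1 - f p.2| := by
  simp only [crossingPairs, indicator, mem_union, mem_prod, mem_ofPred_eq, Pi.one_apply]
  split_ifs <;> grind [abs_cases]

variable [MeasurableSpace P] (μ : Measure P) [IsFiniteMeasure μ] {f : P → ℝ}

lemma measurableSet_crossingPairs (hf : Measurable f) (s t : ℝ) :
    MeasurableSet (crossingPairs f s t) :=
  ((hf measurableSet_Iic).prod (hf measurableSet_Ici)).union
    ((hf measurableSet_Ici).prod (hf measurableSet_Iic))

lemma measureReal_crossingPairs (hf : Measurable f) {s t : ℝ} (hst : s < t) :
    (μ.prod μ).real (crossingPairs f s t) =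
      2 * μ.real {v | f v ≤ s} * μ.real {v | t ≤ f v} := by
  have hdisj : Disjoint ({v | f v ≤ s} ×ˢ {v | t ≤ f v}) ({v | t ≤ f v} ×ˢ {v | f v ≤ s}) :=
    Set.disjoint_left.2 fun p hp hp' => by
      simp only [mem_prod, mem_ofPred_eq] at hp hp'
      linarith [hp.1, hp'.1]
  rw [crossingPairs, measureReal_union hdisj ((hf measurableSet_Ici).prod (hf measurableSet_Iic)),
    measureReal_prod_prod, measureReal_prod_prod]
  ring

lemma measureReal_levels_le_integral_abs_sub (hfm : Measurable f) (hf : Integrable f μ) (k : ℝ) :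
    2 * μ.real {v | f v ≤ k - 1} * (μ.real {v | f v = k} + μ.real {v | k + 1 ≤ f v})
        + 2 * (μ.real {v | f v ≤ k - 1} + μ.real {v | f v = k}) * μ.real {v | k + 1 ≤ f v}
      ≤ ∫ p, |f p.1 - f p.2| ∂(μ.prod μ) := by
  have hint (s t : ℝ) : Integrable ((crossingPairs f s t).indicator 1) (μ.prod μ) :=
    (integrable_const (1 : ℝ)).indicator (measurableSet_crossingPairs hfm s t)
  calc
    _ ≤ 2 * μ.real {v | f v ≤ k - 1} * μ.real {v | k ≤ f v}
          + 2 * μ.real {v | f v ≤ k} * μ.real {v | k + 1 ≤ f v} := by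
      gcongr
      · exact measureReal_add_measureReal_le
          (disjoint_left.2 fun v (h : f v = k) (h' : k + 1 ≤ f v) => by linarith)
          (hfm measurableSet_Ici)
          (union_subset (fun v (h : f v = k) => h.ge)
            fun v (h : k + 1 ≤ f v) => show k ≤ f v by linarith)
      · exact measureReal_add_measureReal_le
          (disjoint_left.2 fun v (h : f v ≤ k - 1) (h' : f v = k) => by linarith)
          (hfm (measurableSet_singleton _))
          (union_subset (fun v (h : f v ≤ k - 1) => show f v ≤ k by linarith)
            fun v (h : f v = k) => h.le)
    _ = ∫ p, (crossingPairs f (k - 1) k).indicator 1 p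
          + (crossingPairs f k (k + 1)).indicator 1 p ∂(μ.prod μ) := by
      rw [integral_add (hint _ _) (hint _ _),
        integral_indicator_one (measurableSet_crossingPairs hfm _ _),
        integral_indicator_one (measurableSet_crossingPairs hfm _ _),
        measureReal_crossingPairs μ hfm (sub_one_lt k),
        measureReal_crossingPairs μ hfm (lt_add_one k)]
    _ ≤ _ := integral_mono ((hint _ _).add (hint _ _)) ((hf.comp_fst μ).sub (hf.comp_snd μ)).abs
      (indicator_crossingPairs_add_le_abs_sub f k)

end Crossing

section Levels

variable {P : Type*} [MeasurableSpace P] (μ : Measure P) [IsProbabilityMeasure μ]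

lemma exists_int_median {f : P → ℝ} (hf : Measurable f) :
    ∃ k : ℤ, μ.real {v | f v ≤ k - 1} ≤ 1 / 2 ∧ μ.real {v | k + 1 ≤ f v} ≤ 1 / 2 := by
  have := Measure.isProbabilityMeasure_map (μ := μ) hf.aemeasurable
  have hcdf (x : ℝ) : cdf (μ.map f) x = μ.real {v | f v ≤ x} := by
    rw [cdf_eq_real, map_measureReal_apply hf measurableSet_Iic]
    rfl
  have hbot : ∀ᶠ n : ℤ in atBot, cdf (μ.map f) n < 1 / 2 :=
    ((tendsto_cdf_atBot _).eventually_lt_const (by norm_num)).intCast_atBot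
  have htop : ∀ᶠ n : ℤ in atTop, 1 / 2 < cdf (μ.map f) n :=
    ((tendsto_cdf_atTop _).eventually_const_lt (by norm_num)).intCast_atTop
  obtain ⟨k, hbelow, hk⟩ := Int.exists_not_sub_one_and (p := fun n : ℤ => 1 / 2 ≤ cdf (μ.map f) n)
    (hbot.mono fun n => not_le.2) (htop.exists.imp fun n => le_of_lt)
  simp only [hcdf, not_le, Int.cast_sub, Int.cast_one] at hbelow hk
  have hsum : μ.real {v | f v ≤ k} + μ.real {v | k + 1 ≤ f v} ≤ 1 :=
    (measureReal_add_measureReal_le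
      (disjoint_left.2 fun v (h : f v ≤ k) (h' : k + 1 ≤ f v) => by linarith)
      (hf measurableSet_Ici) (subset_univ _)).trans_eq probReal_univ
  exact ⟨k, hbelow.le, by linarith⟩

lemma one_sub_measureReal_nonint_le (f : P → ℝ) (k : ℤ) :
    1 - μ.real {v | ¬ ∃ z : ℤ, f v = z} ≤
      μ.real {v | f v ≤ k - 1} + μ.real {v | f v = k} + μ.real {v | k + 1 ≤ f v} := by
  set E := {v | ¬ ∃ z : ℤ, f v = z}
  set A := {v | f v ≤ k - 1}
  set B := {v | f v = k}
  set C := {v | k + 1 ≤ f v}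
  have hcover : univ ⊆ E ∪ A ∪ B ∪ C := by
    intro v _
    by_cases hv : ∃ z : ℤ, f v = z
    · obtain ⟨z, hz⟩ := hv
      rcases (by omega : z ≤ k - 1 ∨ z = k ∨ k + 1 ≤ z) with h | rfl | h
      · exact Or.inl (Or.inl (Or.inr (by simp only [A, mem_ofPred_eq, hz]; exact_mod_cast h)))
      · exact Or.inl (Or.inr hz)
      · exact Or.inr (by simp only [C, mem_ofPred_eq, hz]; exact_mod_cast h)
    · exact Or.inl (Or.inl (Or.inl hv))
  have hunion (s t : Set P) := measureReal_union_le (μ := μ) s t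
  linarith [probReal_univ (μ := μ), measureReal_mono (μ := μ) hcover,
    hunion (E ∪ A ∪ B) C, hunion (E ∪ A) B, hunion E A]

end Levels

/-- If `f` is integer-valued off a set of probability `< 1/4` and has mean oscillation
`∫∫ |f(v) - f(v')| < 1/4`, then `f` equals a single integer `k` on a set of
probability at least `1/2`. -/
theorem small_oscillation_integer_concentration {P : Type*} [MeasurableSpace P]
    (ρ : Measure P) [IsProbabilityMeasure ρ]
    (f : P → ℝ) (hfmeas : Measurable f) (hf : Integrable f ρ)
    (hE : ρ {v | ¬ ∃ z : ℤ, f v = (z : ℝ)} < ENNReal.ofReal (1 / 4))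
    (hosc : ∫ p : P × P, |f p.1 - f p.2| ∂(ρ.prod ρ) < 1 / 4) :
    ∃ k : ℤ, ∃ E' : Set P, (∀ v ∈ E', f v = (k : ℝ)) ∧
      ENNReal.ofReal (1 / 2) ≤ ρ E' := by
  obtain ⟨k, hlow, hhigh⟩ := exists_int_median ρ hfmeas
  refine ⟨k, {v | f v = k}, fun v hv => hv, ?_⟩
  rw [← ofReal_measureReal]
  refine ENNReal.ofReal_le_ofReal (not_lt.1 fun hmid => hosc.not_gt ?_)
  have hnonint : ρ.real {v | ¬ ∃ z : ℤ, f v = z} < 1 / 4 := ENNReal.toReal_lt_of_lt_ofReal hE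
  calc 1 / 4 < _ := quarter_lt_two_mul_add_two_mul measureReal_nonneg measureReal_nonneg hlow
        hmid.le hhigh (by linarith [one_sub_measureReal_nonint_le ρ f k])
    _ ≤ _ := measureReal_levels_le_integral_abs_sub ρ hfmeas hf k
end

section
/- Let μ be a finite Borel measure on ℝⁿ and m > 0, Λ ≥ 1, n ≥ 3. Define, for p ∈ ℝⁿ, r_Λ(p) = min{ s ∈ [1/m, ∞) : ∫ (max(|x-p|, s))^{2-n} dμ(x) ≤ m²/Λ } (which exists since the integral is continuous and nonincreasing in s with limit 0). If p satisfies r_Λ(p) > 1/m (i.e. ∫ max(|x-p|, 1/m)^{2-n} dμ > m²/Λ), then ∫_{B(p, r_{2Λ}(p))} (max(|x-p|, r_Λ(p)))^{2-n} dμ(x) ≥ m²/(2Λ). -/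
open MeasureTheory Metric
open scoped ENNReal

/-- The characteristic radius `r_Λ(p)`: the least `s ∈ [1/m, ∞)` such that
`∫ max(d(x,p), s)^{2-n} dμ(x) ≤ m²/Λ`. -/
noncomputable def charRad {X : Type*} [MetricSpace X] [MeasurableSpace X]
    (μ : Measure X) (n : ℕ) (m Λ : ℝ) (p : X) : ℝ :=
  sInf {s : ℝ | 1 / m ≤ s ∧
    ∫⁻ x, (ENNReal.ofReal (max (dist x p) s)) ^ ((2 : ℝ) - n) ∂μ ≤
      ENNReal.ofReal (m ^ 2 / Λ)}

/-!
Write `F(s) = ∫ max(d(x,p), s)^{2-n} dμ(x)`. For a finite measure and `n ≥ 3`, dominated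
convergence makes `F` continuous on `(0, ∞)` with limit `0` at infinity, so the infimum defining
`r_Λ(p)` is attained: `F(r_Λ) ≤ m²/Λ`, and `F(r_Λ) ≥ m²/Λ` as soon as `F(1/m) ≥ m²/Λ`.
Outside `B(p, R)`, `R = r_{2Λ}(p) ≥ r_Λ(p)`, the kernels `max(d, r_Λ)` and `max(d, R)` agree,
so the integral over the ball is at least `F(r_Λ) - F(R) ≥ m²/Λ - m²/(2Λ)`.
-/

open Filter Set Topology

theorem ENNReal.rpow_le_rpow_of_nonpos {x y : ℝ≥0∞} {z : ℝ} (hxy : x ≤ y) (hz : z ≤ 0) :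
    y ^ z ≤ x ^ z := by
  simpa only [ENNReal.rpow_neg, inv_inv] using
    ENNReal.inv_le_inv.2 (ENNReal.rpow_le_rpow hxy (neg_nonneg.2 hz))

section Sublevel

variable {β : Type*} [LinearOrder β] [TopologicalSpace β] [OrderClosedTopology β]
  {f : ℝ → β} {a : ℝ} {b : β}

theorem apply_sInf_sublevel_le (hf : ContinuousOn f (Ici a)) (hne : ∃ s, a ≤ s ∧ f s ≤ b) :
    f (sInf {s | a ≤ s ∧ f s ≤ b}) ≤ b :=
  ((hf.preimage_isClosed_of_isClosed isClosed_Ici isClosed_Iic).csInf_mem hne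
    ⟨a, fun _ hs ↦ hs.1⟩).2

theorem le_apply_sInf_sublevel (hf : ContinuousOn f (Ici a)) (hne : ∃ s, a ≤ s ∧ f s ≤ b)
    (ha : b ≤ f a) : b ≤ f (sInf {s | a ≤ s ∧ f s ≤ b}) := by
  set S := {s | a ≤ s ∧ f s ≤ b}
  have hS : BddBelow S := ⟨a, fun _ hs ↦ hs.1⟩
  obtain haρ | haρ := (le_csInf hne fun _ hs ↦ hs.1 : a ≤ sInf S).eq_or_lt
  · rwa [← haρ]
  have hbelow : Ico a (sInf S) ⊆ Ici a ∩ f ⁻¹' Ici b := fun t ht ↦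
    ⟨ht.1, not_lt.1 fun hfb ↦ (csInf_le hS ⟨ht.1, hfb.le⟩).not_gt ht.2⟩
  have hclosed := hf.preimage_isClosed_of_isClosed isClosed_Ici (isClosed_Ici (a := b))
  rw [← hclosed.closure_subset_iff, closure_Ico haρ.ne] at hbelow
  exact (hbelow ⟨haρ.le, le_rfl⟩).2

end Sublevel

section TruncPotential

variable {X : Type*} [MetricSpace X] [MeasurableSpace X] (μ : Measure X) (p : X) (c : ℝ)

noncomputable def truncPotential (s : ℝ) : ℝ≥0∞ :=
  ∫⁻ x, ENNReal.ofReal (max (dist x p) s) ^ c ∂μ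

variable {μ p c}

theorem truncPotential_le_setLIntegral_closedBall_add [OpensMeasurableSpace X] {r R : ℝ}
    (hrR : r ≤ R) :
    truncPotential μ p c r ≤
      (∫⁻ x in closedBall p R, ENNReal.ofReal (max (dist x p) r) ^ c ∂μ) +
        truncPotential μ p c R := by
  rw [truncPotential, ← lintegral_add_compl _ measurableSet_closedBall]
  gcongr
  calc ∫⁻ x in (closedBall p R)ᶜ, ENNReal.ofReal (max (dist x p) r) ^ c ∂μ
      = ∫⁻ x in (closedBall p R)ᶜ, ENNReal.ofReal (max (dist x p) R) ^ c ∂μ := by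
        refine setLIntegral_congr_fun measurableSet_closedBall.compl fun x hx ↦ ?_
        have hRx : R < dist x p := not_le.1 hx
        rw [max_eq_left (hrR.trans hRx.le), max_eq_left hRx.le]
    _ ≤ truncPotential μ p c R := setLIntegral_le_lintegral _ _

theorem tendsto_truncPotential [OpensMeasurableSpace X] [IsFiniteMeasure μ] (hc : c ≤ 0)
    {l : Filter ℝ} [l.IsCountablyGenerated] {a : ℝ} (ha : 0 < a) (hl : ∀ᶠ s in l, a ≤ s)
    {g : X → ℝ≥0∞}
    (hg : ∀ x, Tendsto (fun s ↦ ENNReal.ofReal (max (dist x p) s) ^ c) l (𝓝 (g x))) :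
    Tendsto (truncPotential μ p c) l (𝓝 (∫⁻ x, g x ∂μ)) := by
  refine tendsto_lintegral_filter_of_dominated_convergence (fun _ ↦ ENNReal.ofReal a ^ c)
    (.of_forall fun _ ↦ by fun_prop) ?_ ?_ (.of_forall hg)
  · filter_upwards [hl] with s hs
    exact .of_forall fun x ↦
      ENNReal.rpow_le_rpow_of_nonpos (ENNReal.ofReal_le_ofReal (hs.trans (le_max_right _ _))) hc
  · exact (lintegral_const_lt_top
      (ENNReal.rpow_ne_top_of_ne_zero (ENNReal.ofReal_pos.2 ha).ne' ENNReal.ofReal_ne_top)).ne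

theorem continuousOn_truncPotential [OpensMeasurableSpace X] [IsFiniteMeasure μ] (hc : c ≤ 0) :
    ContinuousOn (truncPotential μ p c) (Ioi 0) := fun s hs ↦
  ContinuousAt.continuousWithinAt <|
    tendsto_truncPotential hc (half_pos hs) (eventually_ge_nhds (half_lt_self hs)) fun _ ↦
      (ENNReal.continuous_rpow_const.comp <|
        ENNReal.continuous_ofReal.comp (continuous_const.max continuous_id)).tendsto s

theorem tendsto_truncPotential_atTop [OpensMeasurableSpace X] [IsFiniteMeasure μ] (hc : c < 0) :
    Tendsto (truncPotential μ p c) atTop (𝓝 0) := by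
  have hpointwise (x : X) :
      Tendsto (fun s ↦ ENNReal.ofReal (max (dist x p) s) ^ c) atTop (𝓝 0) := by
    rw [← ENNReal.top_rpow_of_neg hc]
    exact (ENNReal.continuous_rpow_const.tendsto ⊤).comp
      (ENNReal.tendsto_ofReal_atTop.comp (tendsto_atTop_mono (le_max_right _) tendsto_id))
  simpa using tendsto_truncPotential (μ := μ) hc.le one_pos (eventually_ge_atTop 1) hpointwise

theorem exists_truncPotential_le [OpensMeasurableSpace X] [IsFiniteMeasure μ] (hc : c < 0)
    {b : ℝ≥0∞} (hb : 0 < b) (a : ℝ) : ∃ s, a ≤ s ∧ truncPotential μ p c s ≤ b :=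
  (((tendsto_truncPotential_atTop hc).eventually (ge_mem_nhds hb)).and
    (eventually_ge_atTop a)).exists.imp fun _ hs ↦ ⟨hs.2, hs.1⟩

end TruncPotential

section CharRad

variable {X : Type*} [MetricSpace X] [MeasurableSpace X] [OpensMeasurableSpace X]
  {μ : Measure X} [IsFiniteMeasure μ] {n : ℕ} {m Λ : ℝ} {p : X}

theorem charRad_sublevel_nonempty (hn : 2 < n) (hm : 0 < m) (hΛ : 0 < Λ) :
    ∃ s, 1 / m ≤ s ∧ truncPotential μ p ((2 : ℝ) - n) s ≤ ENNReal.ofReal (m ^ 2 / Λ) :=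
  exists_truncPotential_le (sub_neg.2 (by exact_mod_cast hn))
    (ENNReal.ofReal_pos.2 (by positivity)) _

theorem continuousOn_truncPotential_Ici_one_div (hn : 2 < n) (hm : 0 < m) :
    ContinuousOn (truncPotential μ p ((2 : ℝ) - n)) (Ici (1 / m)) :=
  (continuousOn_truncPotential (sub_nonpos.2 (by exact_mod_cast hn.le))).mono
    (Ici_subset_Ioi.2 (by positivity))

theorem truncPotential_charRad_le (hn : 2 < n) (hm : 0 < m) (hΛ : 0 < Λ) :
    truncPotential μ p ((2 : ℝ) - n) (charRad μ n m Λ p) ≤ ENNReal.ofReal (m ^ 2 / Λ) :=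
  apply_sInf_sublevel_le (continuousOn_truncPotential_Ici_one_div hn hm)
    (charRad_sublevel_nonempty hn hm hΛ)

theorem le_truncPotential_charRad (hn : 2 < n) (hm : 0 < m) (hΛ : 0 < Λ)
    (hp : ENNReal.ofReal (m ^ 2 / Λ) ≤ truncPotential μ p ((2 : ℝ) - n) (1 / m)) :
    ENNReal.ofReal (m ^ 2 / Λ) ≤ truncPotential μ p ((2 : ℝ) - n) (charRad μ n m Λ p) :=
  le_apply_sInf_sublevel (continuousOn_truncPotential_Ici_one_div hn hm)
    (charRad_sublevel_nonempty hn hm hΛ) hp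

theorem charRad_mono (hn : 2 < n) (hm : 0 < m) {Λ' : ℝ} (hΛ : 0 < Λ) (hΛΛ' : Λ ≤ Λ') :
    charRad μ n m Λ p ≤ charRad μ n m Λ' p :=
  csInf_le_csInf ⟨1 / m, fun _ hs ↦ hs.1⟩
    (charRad_sublevel_nonempty hn hm (hΛ.trans_le hΛΛ'))
    fun _ hs ↦ ⟨hs.1, hs.2.trans (ENNReal.ofReal_le_ofReal
      (div_le_div_of_nonneg_left (sq_nonneg m) hΛ hΛΛ'))⟩

end CharRad

theorem charRad_ball_lower_mass_general (n : ℕ) (hn : 3 ≤ n)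
    (μ : Measure (EuclideanSpace ℝ (Fin n))) [IsFiniteMeasure μ]
    (m Λ : ℝ) (hm : 0 < m) (p : EuclideanSpace ℝ (Fin n))
    (hp : ENNReal.ofReal (m ^ 2 / Λ) <
      ∫⁻ x, (ENNReal.ofReal (max (dist x p) (1 / m))) ^ ((2 : ℝ) - n) ∂μ) :
    ENNReal.ofReal (m ^ 2 / (2 * Λ)) ≤
      ∫⁻ x in closedBall p (charRad μ n m (2 * Λ) p),
        (ENNReal.ofReal (max (dist x p) (charRad μ n m Λ p))) ^ ((2 : ℝ) - n) ∂μ := by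
  obtain hΛ | hΛ := le_or_gt Λ 0
  · rw [ENNReal.ofReal_of_nonpos (div_nonpos_of_nonneg_of_nonpos (sq_nonneg m) (by linarith))]
    exact zero_le
  have hhalf : ENNReal.ofReal (m ^ 2 / Λ) =
      ENNReal.ofReal (m ^ 2 / (2 * Λ)) + ENNReal.ofReal (m ^ 2 / (2 * Λ)) := by
    rw [← ENNReal.ofReal_add (by positivity) (by positivity)]
    congr 1
    field_simp
    ring
  set r := charRad μ n m Λ p
  set R := charRad μ n m (2 * Λ) p
  refine (ENNReal.add_le_add_iff_right (ENNReal.ofReal_ne_top (r := m ^ 2 / (2 * Λ)))).1 ?_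
  calc ENNReal.ofReal (m ^ 2 / (2 * Λ)) + ENNReal.ofReal (m ^ 2 / (2 * Λ))
      = ENNReal.ofReal (m ^ 2 / Λ) := hhalf.symm
    _ ≤ truncPotential μ p ((2 : ℝ) - n) r := le_truncPotential_charRad hn hm hΛ hp.le
    _ ≤ (∫⁻ x in closedBall p R, ENNReal.ofReal (max (dist x p) r) ^ ((2 : ℝ) - n) ∂μ) +
          truncPotential μ p ((2 : ℝ) - n) R :=
      truncPotential_le_setLIntegral_closedBall_add (charRad_mono hn hm hΛ (by linarith))
    _ ≤ _ := by
      gcongr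
      exact truncPotential_charRad_le hn hm (by positivity)

/-- If `r_Λ(p) > 1/m`, i.e. `∫ max(d(x,p),1/m)^{2-n} dμ > m²/Λ`, then
`∫_{B(p, r_{2Λ}(p))} max(d(x,p), r_Λ(p))^{2-n} dμ ≥ m²/(2Λ)`. -/
theorem charRad_ball_lower_mass (n : ℕ) (hn : 3 ≤ n)
    (μ : Measure (EuclideanSpace ℝ (Fin n))) [IsFiniteMeasure μ]
    (m Λ : ℝ) (hm : 0 < m) (hΛ : 1 ≤ Λ) (p : EuclideanSpace ℝ (Fin n))
    (hp : ENNReal.ofReal (m ^ 2 / Λ) <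
      ∫⁻ x, (ENNReal.ofReal (max (dist x p) (1 / m))) ^ ((2 : ℝ) - n) ∂μ) :
    ENNReal.ofReal (m ^ 2 / (2 * Λ)) ≤
      ∫⁻ x in closedBall p (charRad μ n m (2 * Λ) p),
        (ENNReal.ofReal (max (dist x p) (charRad μ n m Λ p))) ^ ((2 : ℝ) - n) ∂μ :=
  charRad_ball_lower_mass_general n hn μ m Λ hm p hp
end

section
/- Let T be a finite set of 'obstacle balls' B(pᵢ, sᵢ) in ℝⁿ, let Σ be a subset of ℝⁿ that for each s > 0 can be covered by N(s) ≤ A/s² balls of radius s, and let v range over a probability space of translations such that for each fixed ball B(q, s) and each obstacle ball B(pᵢ, sᵢ) with sᵢ ≤ s, the probability that the translate of B(q, s) meets B(pᵢ, sᵢ) is at most C (sᵢ/τ)ⁿ. Then the probability that the translate of Σ meets ⋃ᵢ B(pᵢ, sᵢ) is at most C A τ^{-n} ∑ᵢ sᵢ^{n-2}. -/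
open MeasureTheory Metric
open scoped ENNReal

/-!
Cover `Σ` by at most `A / sᵢ²` balls of radius `sᵢ`. A translate of `Σ` can only meet
`B(pᵢ, sᵢ)` if the translate of one of these covering balls does, so the union bound gives
probability at most `(A / sᵢ²) · C (sᵢ / τ)ⁿ = C A τ⁻ⁿ sᵢⁿ⁻²` for each obstacle; a second union
bound over the obstacles sums these.
-/

section HittingEvents

variable {V X Y ι : Type*} [MeasurableSpace V] (ρ : Measure V) (g : V → X → Y)

theorem measure_image_inter_iUnion_nonempty_le_sum [Fintype ι] (S : Set X) (B : ι → Set Y) :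
    ρ {v | (g v '' S ∩ ⋃ i, B i).Nonempty} ≤ ∑ i, ρ {v | (g v '' S ∩ B i).Nonempty} := by
  have hunion : {v | (g v '' S ∩ ⋃ i, B i).Nonempty} = ⋃ i, {v | (g v '' S ∩ B i).Nonempty} := by
    ext v
    simp only [Set.inter_iUnion, Set.nonempty_iUnion, Set.mem_ofPred_eq, Set.mem_iUnion]
  rw [hunion]
  exact measure_iUnion_fintype_le ρ _

theorem measure_image_inter_nonempty_le_card_mul_of_subset_biUnion {S : Set X} {B : Set Y}
    {F : Finset ι} {U : ι → Set X} (hS : S ⊆ ⋃ q ∈ F, U q) {b : ℝ≥0∞}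
    (hb : ∀ q ∈ F, ρ {v | (g v '' U q ∩ B).Nonempty} ≤ b) :
    ρ {v | (g v '' S ∩ B).Nonempty} ≤ F.card * b := by
  have hsub : {v | (g v '' S ∩ B).Nonempty} ⊆ ⋃ q ∈ F, {v | (g v '' U q ∩ B).Nonempty} := by
    rintro v ⟨_, ⟨x, hxS, rfl⟩, hxB⟩
    obtain ⟨q, hqF, hxU⟩ := Set.mem_iUnion₂.1 (hS hxS)
    exact Set.mem_biUnion hqF ⟨g v x, ⟨x, hxU, rfl⟩, hxB⟩
  calc ρ {v | (g v '' S ∩ B).Nonempty}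
      ≤ ∑ q ∈ F, ρ {v | (g v '' U q ∩ B).Nonempty} :=
        (measure_mono hsub).trans (measure_biUnion_finset_le F _)
    _ ≤ ∑ _q ∈ F, b := Finset.sum_le_sum hb
    _ = F.card * b := by rw [Finset.sum_const, nsmul_eq_mul]

end HittingEvents

theorem ENNReal.natCast_mul_ofReal_le_ofReal_mul {k : ℕ} {a : ℝ} (hk : (k : ℝ) ≤ a) (b : ℝ) :
    (k : ℝ≥0∞) * ENNReal.ofReal b ≤ ENNReal.ofReal (a * b) := by
  rw [ENNReal.ofReal_mul (k.cast_nonneg.trans hk), ← ENNReal.ofReal_natCast]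
  gcongr

theorem covering_number_mul_hitting_bound_eq (n : ℕ) {s : ℝ} (hs : 0 < s) (A τ C : ℝ) :
    A / s ^ 2 * (C * (s / τ) ^ n) = C * A * τ ^ (-(n : ℝ)) * s ^ ((n : ℝ) - 2) := by
  rw [Real.rpow_neg_natCast, zpow_neg, zpow_natCast,
    show ((n : ℝ) - 2) = ((n : ℤ) - 2 : ℤ) by push_cast; ring, Real.rpow_intCast,
    zpow_sub₀ hs.ne', zpow_natCast, zpow_ofNat, div_pow]
  field_simp

theorem random_translate_avoids_obstacles_general
    (n : ℕ) {V : Type*} [MeasurableSpace V] (ρ : Measure V)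
    (tr : V → EuclideanSpace ℝ (Fin n))
    (Sig : Set (EuclideanSpace ℝ (Fin n))) (A τ C : ℝ) (hA : 0 < A) (hτ : 0 < τ) (hC : 0 < C)
    {ι : Type*} [Fintype ι] (p : ι → EuclideanSpace ℝ (Fin n)) (s : ι → ℝ)
    (hs : ∀ i, 0 < s i)
    (hcov : ∀ t : ℝ, 0 < t → ∃ F : Finset (EuclideanSpace ℝ (Fin n)),
      (F.card : ℝ) ≤ A / t ^ 2 ∧ Sig ⊆ ⋃ q ∈ F, ball q t)
    (hprob : ∀ (q : EuclideanSpace ℝ (Fin n)) (t : ℝ), 0 < t → ∀ i, s i ≤ t →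
      ρ {v | (((· + tr v) '' ball q t) ∩ ball (p i) (s i)).Nonempty} ≤
        ENNReal.ofReal (C * (s i / τ) ^ n)) :
    ρ {v | (((· + tr v) '' Sig) ∩ ⋃ i, ball (p i) (s i)).Nonempty} ≤
      ENNReal.ofReal (C * A * τ ^ (-(n : ℝ)) * ∑ i, (s i) ^ ((n : ℝ) - 2)) := by
  have hobstacle : ∀ i, ρ {v | (((· + tr v) '' Sig) ∩ ball (p i) (s i)).Nonempty} ≤
      ENNReal.ofReal (C * A * τ ^ (-(n : ℝ)) * (s i) ^ ((n : ℝ) - 2)) := fun i ↦ by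
    obtain ⟨F, hFcard, hFcov⟩ := hcov (s i) (hs i)
    rw [← covering_number_mul_hitting_bound_eq n (hs i)]
    exact (measure_image_inter_nonempty_le_card_mul_of_subset_biUnion ρ _ hFcov
      fun q _ ↦ hprob q (s i) (hs i) i le_rfl).trans
      (ENNReal.natCast_mul_ofReal_le_ofReal_mul hFcard _)
  calc ρ {v | (((· + tr v) '' Sig) ∩ ⋃ i, ball (p i) (s i)).Nonempty}
      ≤ ∑ i, ρ {v | (((· + tr v) '' Sig) ∩ ball (p i) (s i)).Nonempty} :=
        measure_image_inter_iUnion_nonempty_le_sum ρ _ Sig _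
    _ ≤ ∑ i, ENNReal.ofReal (C * A * τ ^ (-(n : ℝ)) * (s i) ^ ((n : ℝ) - 2)) :=
        Finset.sum_le_sum fun i _ ↦ hobstacle i
    _ = ENNReal.ofReal (C * A * τ ^ (-(n : ℝ)) * ∑ i, (s i) ^ ((n : ℝ) - 2)) := by
        rw [Finset.mul_sum, ENNReal.ofReal_sum_of_nonneg fun i _ ↦ by have := hs i; positivity]

/-- Union-bound transversality estimate: if `Σ` can be covered at every scale `s` by at
most `A/s²` balls of radius `s`, and for each ball `B(q,s)` and each obstacle ball
`B(pᵢ,sᵢ)` with `sᵢ ≤ s` the probability that a random translate of `B(q,s)` meets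
`B(pᵢ,sᵢ)` is at most `C (sᵢ/τ)ⁿ`, then the probability that a random translate of `Σ`
meets `⋃ᵢ B(pᵢ,sᵢ)` is at most `C A τ^{-n} ∑ᵢ sᵢ^{n-2}`. -/
theorem random_translate_avoids_obstacles
    (n : ℕ) {V : Type*} [MeasurableSpace V] (ρ : Measure V) [IsProbabilityMeasure ρ]
    (tr : V → EuclideanSpace ℝ (Fin n))
    (Sig : Set (EuclideanSpace ℝ (Fin n))) (A τ C : ℝ) (hA : 0 < A) (hτ : 0 < τ) (hC : 0 < C)
    {ι : Type*} [Fintype ι] (p : ι → EuclideanSpace ℝ (Fin n)) (s : ι → ℝ)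
    (hs : ∀ i, 0 < s i)
    (hcov : ∀ t : ℝ, 0 < t → ∃ F : Finset (EuclideanSpace ℝ (Fin n)),
      (F.card : ℝ) ≤ A / t ^ 2 ∧ Sig ⊆ ⋃ q ∈ F, ball q t)
    (hprob : ∀ (q : EuclideanSpace ℝ (Fin n)) (t : ℝ), 0 < t → ∀ i, s i ≤ t →
      ρ {v | (((· + tr v) '' ball q t) ∩ ball (p i) (s i)).Nonempty} ≤
        ENNReal.ofReal (C * (s i / τ) ^ n)) :
    ρ {v | (((· + tr v) '' Sig) ∩ ⋃ i, ball (p i) (s i)).Nonempty} ≤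
      ENNReal.ofReal (C * A * τ ^ (-(n : ℝ)) * ∑ i, (s i) ^ ((n : ℝ) - 2)) :=
  random_translate_avoids_obstacles_general n ρ tr Sig A τ C hA hτ hC p s hs hcov hprob
end
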